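/- Let ε, K > 0 be constants with ε ≤ K, and let p = p(n) satisfy ε/n ≤ p(n) ≤ K/n for all n. Then asymptotically almost surely the random graph G ~ G(n,p) has at least (ε/2)·e^{−2K}·n vertices of degree exactly 1, and consequently asymptotically almost surely D(G) ≤ ( 1 − (ε/4)·e^{−2K} )·n. -/

import Mathlib

open MeasureTheory Filter
open scoped Classical

/-- The Bernoulli measure on `Bool` with success probability `p` (clamped to `[0,1]`). -/
noncomputable def bernoulliMeasure (p : ℝ) : Measure Bool :=
  (PMF.bernoulli (min (Real.toNNReal p) 1) (min_le_right _ _)).toMeasure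

instance (p : ℝ) : IsProbabilityMeasure (bernoulliMeasure p) :=
  PMF.toMeasure.isProbabilityMeasure _

/-- The Erdős–Rényi measure `G(n,p)`: every potential edge (pair of vertices of `Fin n`)
is present independently with probability `p`.  A sample point is an indicator function
on `Sym2 (Fin n)` (diagonal coordinates are simply ignored). -/
noncomputable def gnp (n : ℕ) (p : ℝ) : Measure (Sym2 (Fin n) → Bool) :=
  Measure.pi fun _ => bernoulliMeasure p

/-- The simple graph determined by an edge-indicator function. -/
def graphOf {n : ℕ} (f : Sym2 (Fin n) → Bool) : SimpleGraph (Fin n) where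
  Adj v w := v ≠ w ∧ f s(v, w) = true
  symm := by
    constructor
    intro v w h
    exact ⟨Ne.symm h.1, by rw [Sym2.eq_swap]; exact h.2⟩
  loopless := ⟨fun v h => h.1 rfl⟩

/-- A set `S` of vertices is dominating if every vertex is in `S` or adjacent to a member
of `S`. -/
def IsDominating {n : ℕ} (G : SimpleGraph (Fin n)) (S : Set (Fin n)) : Prop :=
  ∀ v, v ∈ S ∨ ∃ u ∈ S, G.Adj u v

/-- The domination number: the smallest cardinality of a dominating set. -/
noncomputable def domNumber {n : ℕ} (G : SimpleGraph (Fin n)) : ℕ :=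
  sInf {r | ∃ S : Finset (Fin n), S.card = r ∧ IsDominating G ↑S}

/-- The number of dominating sets of size `r`. -/
noncomputable def numDomSets {n : ℕ} (G : SimpleGraph (Fin n)) (r : ℕ) : ℕ :=
  ((Finset.powersetCard r (Finset.univ : Finset (Fin n))).filter
    (fun S => IsDominating G ↑S)).card

/-- The expected number of dominating sets of size `r` in `G(n,p)`:
`E(X_r) = C(n,r) (1-(1-p)^r)^(n-r)`. -/
noncomputable def EX (n r : ℕ) (p : ℝ) : ℝ :=
  (n.choose r : ℝ) * (1 - (1 - p) ^ r) ^ (n - r)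

/-- The critical size `r̂ = min{ r | E(X_r) ≥ 1/d } - 1`, where `d = np`. -/
noncomputable def rhat (n : ℕ) (p : ℝ) : ℕ :=
  sInf {r : ℕ | EX n r p ≥ 1 / (n * p)} - 1


/-!
The number `X` of degree-one vertices of `G(n,p)` is a sum of `n` indicators of events of
probability `(n-1) p (1-p)^(n-2) ≥ (1 - 1/n) ε e^{-2K}` (as `1 - p ≥ e^{-2p}` for `p ≤ 1/2`).
For distinct vertices the two events are nearly uncorrelated (covariance `O(1/n)`), so
`Var X = O(n)` while `E X ≥ (n - 1) ε e^{-2K}`, and Chebyshev's inequality gives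
`X ≥ (ε/2) e^{-2K} n` a.a.s. Deterministically, `D(G) ≤ n - X/2`.
-/

open Finset

instance (n : ℕ) (p : ℝ) : IsProbabilityMeasure (gnp n p) := by
  unfold gnp; infer_instance

lemma measurableSet_of_edges {n : ℕ} (S : Set (Sym2 (Fin n) → Bool)) : MeasurableSet S :=
  .of_discrete

section Cylinder

variable {n : ℕ} {q : ℝ}

lemma bernoulliMeasure_real_singleton (hq0 : 0 ≤ q) (hq1 : q ≤ 1) (b : Bool) :
    (bernoulliMeasure q).real {b} = if b then q else 1 - q := by
  rw [measureReal_def, bernoulliMeasure, PMF.toMeasure_apply_singleton _ _ (.singleton b),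
    PMF.bernoulli_apply, min_eq_left (Real.toNNReal_le_one.2 hq1)]
  cases b <;> simp [hq0, hq1]

def edgeCylinder (T F : Finset (Sym2 (Fin n))) : Set (Sym2 (Fin n) → Bool) :=
  {f | (∀ e ∈ T, f e = true) ∧ ∀ e ∈ F, f e = false}

lemma edgeCylinder_eq_pi {T F : Finset (Sym2 (Fin n))} (h : Disjoint T F) :
    edgeCylinder T F =
      Set.univ.pi fun e => if e ∈ T then {true} else if e ∈ F then {false} else .univ := by
  ext f
  simp only [edgeCylinder, Set.mem_pi, Set.mem_univ, true_implies]
  refine ⟨fun ⟨hT, hF⟩ e => ?_, fun hf => ⟨fun e he => ?_, fun e he => ?_⟩⟩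
  · split_ifs with heT heF
    exacts [hT e heT, hF e heF, trivial]
  · simpa [he] using hf e
  · simpa [he, disjoint_right.1 h he] using hf e

lemma gnp_real_edgeCylinder (hq0 : 0 ≤ q) (hq1 : q ≤ 1) {T F : Finset (Sym2 (Fin n))}
    (h : Disjoint T F) : (gnp n q).real (edgeCylinder T F) = q ^ #T * (1 - q) ^ #F := by
  rw [edgeCylinder_eq_pi h, gnp, measureReal_def, Measure.pi_pi, ENNReal.toReal_prod]
  simp_rw [← measureReal_def, apply_ite (bernoulliMeasure q).real, probReal_univ,
    bernoulliMeasure_real_singleton hq0 hq1, if_true, Bool.false_eq_true, if_false]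
  rw [prod_ite, prod_ite_mem, prod_const, prod_const, filter_mem_eq_inter, univ_inter,
    filter_not, filter_mem_eq_inter, univ_inter, ← compl_eq_univ_sdiff, inter_comm,
    ← sdiff_eq_inter_compl, h.symm.sdiff_eq_left]

end Cylinder

section Leaves

variable {V : Type*} [Fintype V]

noncomputable def leaves (G : SimpleGraph V) : Finset V := {v | G.degree v = 1}

lemma card_filter_adj_eq_degree (G : SimpleGraph V) (v : V) :
    #{w | G.Adj v w} = G.degree v := by
  rw [← G.card_neighborFinset_eq_degree, G.neighborFinset_eq_filter]

end Leaves

section EdgesAt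

variable {n : ℕ}

def edgesAt (v : Fin n) : Finset (Sym2 (Fin n)) := (univ.erase v).image (s(v, ·))

lemma mk_mem_edgesAt {v w : Fin n} (h : w ≠ v) : s(v, w) ∈ edgesAt v :=
  mem_image_of_mem _ (mem_erase.2 ⟨h, mem_univ w⟩)

lemma mem_edgesAt {v : Fin n} {e : Sym2 (Fin n)} :
    e ∈ edgesAt v ↔ ∃ w ≠ v, s(v, w) = e := by
  simp [edgesAt]

lemma card_edgesAt (v : Fin n) : #(edgesAt v) = n - 1 := by
  rw [edgesAt, card_image_of_injective _ fun _ _ => Sym2.congr_right.1,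
    card_erase_of_mem (mem_univ v), card_univ, Fintype.card_fin]

lemma edgesAt_inter_edgesAt {v u : Fin n} (h : v ≠ u) : edgesAt v ∩ edgesAt u = {s(v, u)} := by
  ext e
  simp only [mem_inter, mem_edgesAt, mem_singleton]
  constructor
  · rintro ⟨⟨w, -, rfl⟩, x, -, hx⟩
    rcases Sym2.eq_iff.1 hx with ⟨rfl, -⟩ | ⟨rfl, rfl⟩
    exacts [absurd rfl h, rfl]
  · rintro rfl
    exact ⟨⟨u, h.symm, rfl⟩, v, h, Sym2.eq_swap⟩

lemma card_edgesAt_union {v u : Fin n} (h : v ≠ u) : #(edgesAt v ∪ edgesAt u) = 2 * n - 3 := by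
  have := card_union_add_card_inter (edgesAt v) (edgesAt u)
  rw [edgesAt_inter_edgesAt h, card_edgesAt, card_edgesAt, card_singleton] at this
  have := Fintype.one_lt_card_iff.2 ⟨v, u, h⟩
  rw [Fintype.card_fin] at this
  omega

@[simp] lemma graphOf_adj {f : Sym2 (Fin n) → Bool} {v w : Fin n} :
    (graphOf f).Adj v w ↔ v ≠ w ∧ f s(v, w) = true := Iff.rfl

lemma degree_graphOf_eq_one_iff {f : Sym2 (Fin n) → Bool} {v : Fin n} :
    (graphOf f).degree v = 1 ↔
      ∃ w ≠ v, f ∈ edgeCylinder {s(v, w)} ((edgesAt v).erase s(v, w)) := by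
  rw [← card_filter_adj_eq_degree, card_eq_one]
  simp only [eq_singleton_iff_unique_mem, mem_filter, mem_univ, true_and, edgeCylinder,
    mem_singleton, forall_eq, mem_erase, mem_edgesAt, Set.mem_ofPred_eq, graphOf_adj]
  refine exists_congr fun w => ?_
  simp only [ne_comm (a := v), and_assoc]
  refine and_congr_right fun hwv => and_congr_right fun hw => ⟨?_, ?_⟩
  · rintro huniq _ ⟨hne, x, hxv, rfl⟩
    by_contra hfx
    exact hne (by rw [huniq x ⟨hxv, by simpa using hfx⟩])
  · rintro hrest x ⟨hxv, hx⟩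
    by_contra hxw
    simp [hrest _ ⟨fun h => hxw (Sym2.congr_right.1 h), x, hxv, rfl⟩] at hx

end EdgesAt

section LeafEvents

variable {n : ℕ} {q : ℝ}

def leafEvent (v : Fin n) : Set (Sym2 (Fin n) → Bool) := {f | (graphOf f).degree v = 1}

lemma leafEvent_eq_biUnion (v : Fin n) :
    leafEvent v = ⋃ w ∈ univ.erase v, edgeCylinder {s(v, w)} ((edgesAt v).erase s(v, w)) := by
  ext f
  simp [leafEvent, degree_graphOf_eq_one_iff]

lemma gnp_real_leafEvent (hq0 : 0 ≤ q) (hq1 : q ≤ 1) (v : Fin n) :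
    (gnp n q).real (leafEvent v) = (n - 1 : ℕ) * (q * (1 - q) ^ (n - 2)) := by
  rw [leafEvent_eq_biUnion, measureReal_biUnion_finset ?_ fun _ _ => measurableSet_of_edges _]
  · have hterm : ∀ w ∈ univ.erase v, (gnp n q).real
        (edgeCylinder {s(v, w)} ((edgesAt v).erase s(v, w))) = q * (1 - q) ^ (n - 2) := by
      intro w hw
      rw [gnp_real_edgeCylinder hq0 hq1 (disjoint_singleton_left.2 (notMem_erase _ _)),
        card_singleton, pow_one, card_erase_of_mem (mk_mem_edgesAt (ne_of_mem_erase hw)),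
        card_edgesAt, Nat.sub_sub]
    rw [sum_congr rfl hterm, sum_const, card_erase_of_mem (mem_univ v), card_univ,
      Fintype.card_fin, nsmul_eq_mul]
  · intro w hw x hx hwx
    rw [Function.onFun, Set.disjoint_left]
    rintro f ⟨hw1, -⟩ ⟨-, hx2⟩
    have hvw : s(v, w) ∈ (edgesAt v).erase s(v, x) :=
      mem_erase.2 ⟨fun h => hwx (Sym2.congr_right.1 h), mk_mem_edgesAt (ne_of_mem_erase hw)⟩
    simp [hx2 _ hvw] at hw1

lemma leafEvent_inter_subset {v u : Fin n} :
    leafEvent v ∩ leafEvent u ⊆ ⋃ w ∈ univ.erase v, ⋃ x ∈ univ.erase u,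
      edgeCylinder {s(v, w), s(u, x)} ((edgesAt v ∪ edgesAt u) \ {s(v, w), s(u, x)}) := by
  rintro f ⟨hv, hu⟩
  obtain ⟨w, hwv, hw1, hw2⟩ := degree_graphOf_eq_one_iff.1 hv
  obtain ⟨x, hxu, hx1, hx2⟩ := degree_graphOf_eq_one_iff.1 hu
  simp only [Set.mem_iUnion, mem_erase, mem_univ, and_true]
  refine ⟨w, hwv, x, hxu, ?_, ?_⟩
  · simp_all
  · intro e he
    simp only [Finset.mem_sdiff, Finset.mem_union, mem_insert, Finset.mem_singleton, not_or]
      at he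
    obtain ⟨he | he, hne, hne'⟩ := he
    exacts [hw2 e (mem_erase.2 ⟨hne, he⟩), hx2 e (mem_erase.2 ⟨hne', he⟩)]

lemma gnp_real_leafEvent_inter_le (hq0 : 0 ≤ q) (hq1 : q ≤ 1) {v u : Fin n} (h : v ≠ u) :
    (gnp n q).real (leafEvent v ∩ leafEvent u) ≤
      q + (n - 1 : ℕ) ^ 2 * (q ^ 2 * (1 - q) ^ (2 * n - 5)) := by
  -- the two prescribed edges `s(v, w)`, `s(u, x)` coincide exactly when `(w, x) = (u, v)`
  have hterm : ∀ w ∈ univ.erase v, ∀ x ∈ univ.erase u,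
      (gnp n q).real (edgeCylinder {s(v, w), s(u, x)}
        ((edgesAt v ∪ edgesAt u) \ {s(v, w), s(u, x)})) ≤
      (if w = u then if x = v then q else 0 else 0) + q ^ 2 * (1 - q) ^ (2 * n - 5) := by
    intro w hw x hx
    have hsub : {s(v, w), s(u, x)} ⊆ edgesAt v ∪ edgesAt u := insert_subset
      (mem_union_left _ (mk_mem_edgesAt (ne_of_mem_erase hw)))
      (singleton_subset_iff.2 (mem_union_right _ (mk_mem_edgesAt (ne_of_mem_erase hx))))
    rw [gnp_real_edgeCylinder hq0 hq1 disjoint_sdiff, card_sdiff_of_subset hsub,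
      card_edgesAt_union h]
    by_cases hwx : w = u ∧ x = v
    · have hpow : (1 - q) ^ (2 * n - 3 - 1) ≤ 1 := pow_le_one₀ (by linarith) (by linarith)
      rw [hwx.1, hwx.2, Sym2.eq_swap, pair_eq_singleton, card_singleton, if_pos rfl, if_pos rfl,
        pow_one]
      nlinarith [pow_nonneg (sub_nonneg.2 hq1) (2 * n - 5)]
    · have hne : s(v, w) ≠ s(u, x) := by
        rw [Ne, Sym2.eq_iff]
        rintro (⟨rfl, -⟩ | ⟨rfl, rfl⟩)
        exacts [h rfl, hwx ⟨rfl, rfl⟩]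
      have hzero : (if w = u then if x = v then q else 0 else (0 : ℝ)) = 0 := by
        split_ifs with h1 h2
        exacts [absurd ⟨h1, h2⟩ hwx, rfl, rfl]
      rw [card_pair hne, hzero, zero_add, Nat.sub_sub]
  calc (gnp n q).real (leafEvent v ∩ leafEvent u)
      ≤ ∑ w ∈ univ.erase v, ∑ x ∈ univ.erase u, (gnp n q).real
          (edgeCylinder {s(v, w), s(u, x)} ((edgesAt v ∪ edgesAt u) \ {s(v, w), s(u, x)})) :=
        (measureReal_mono leafEvent_inter_subset (measure_ne_top _ _)).trans <|
          (measureReal_biUnion_finset_le _ _).trans <|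
            sum_le_sum fun w _ => measureReal_biUnion_finset_le _ _
    _ ≤ ∑ w ∈ univ.erase v, ∑ x ∈ univ.erase u,
          ((if w = u then if x = v then q else 0 else 0) + q ^ 2 * (1 - q) ^ (2 * n - 5)) :=
        sum_le_sum fun w hw => sum_le_sum fun x hx => hterm w hw x hx
    _ = q + (n - 1 : ℕ) ^ 2 * (q ^ 2 * (1 - q) ^ (2 * n - 5)) := by
        simp only [sum_add_distrib, sum_ite_irrel, sum_ite_eq', mem_erase, ne_eq, h, h.symm,
          not_false_eq_true, mem_univ, and_self, ↓reduceIte, sum_const_zero, sum_const,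
          card_erase_of_mem, card_univ, Fintype.card_fin, nsmul_eq_mul, add_right_inj]
        ring

end LeafEvents

section SecondMoment

open ProbabilityTheory

lemma covariance_indicator_one {Ω : Type*} [MeasurableSpace Ω] {μ : Measure Ω}
    [IsProbabilityMeasure μ] {A B : Set Ω} (hA : MeasurableSet A) (hB : MeasurableSet B) :
    cov[A.indicator 1, B.indicator 1; μ] = μ.real (A ∩ B) - μ.real A * μ.real B := by
  have hA' : MemLp (A.indicator (1 : Ω → ℝ)) 2 μ :=
    memLp_indicator_const 2 hA 1 (.inr (measure_ne_top _ _))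
  have hB' : MemLp (B.indicator (1 : Ω → ℝ)) 2 μ :=
    memLp_indicator_const 2 hB 1 (.inr (measure_ne_top _ _))
  rw [covariance_eq_sub hA' hB', ← Set.inter_indicator_one,
    integral_indicator_one (hA.inter hB), integral_indicator_one hA, integral_indicator_one hB]

lemma pow_sub_pow_le_one_sub {a : ℝ} (h0 : 0 ≤ a) (h1 : a ≤ 1) {k j : ℕ}
    (hj : j ≤ k + 1) :
    a ^ k - a ^ j ≤ 1 - a := by
  have : a ^ (k + 1) ≤ a ^ j := pow_le_pow_of_le_one h0 h1 hj
  have : a ^ k ≤ 1 := pow_le_one₀ h0 h1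
  nlinarith [pow_succ a k]

variable {n : ℕ} {q : ℝ}

lemma card_leaves_graphOf (f : Sym2 (Fin n) → Bool) :
    (#(leaves (graphOf f)) : ℝ) = ∑ v, (leafEvent v).indicator 1 f := by
  simp [leaves, leafEvent, Set.indicator_apply]

lemma integral_card_leaves (hq0 : 0 ≤ q) (hq1 : q ≤ 1) :
    ∫ f, (#(leaves (graphOf f)) : ℝ) ∂gnp n q =
      n * ((n - 1 : ℕ) * (q * (1 - q) ^ (n - 2))) := by
  simp_rw [card_leaves_graphOf]
  rw [integral_finsetSum _ fun _ _ => .of_finite]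
  simp_rw [integral_indicator_one (measurableSet_of_edges _), gnp_real_leafEvent hq0 hq1]
  rw [sum_const, card_univ, Fintype.card_fin, nsmul_eq_mul]

lemma covariance_leafEvent_self_le (hq0 : 0 ≤ q) (hq1 : q ≤ 1) (v : Fin n) :
    cov[(leafEvent v).indicator 1, (leafEvent v).indicator 1; gnp n q] ≤ n * q := by
  rw [covariance_indicator_one (measurableSet_of_edges _) (measurableSet_of_edges _),
    Set.inter_self, gnp_real_leafEvent hq0 hq1]
  have hP0 : 0 ≤ ((n - 1 : ℕ) : ℝ) * (q * (1 - q) ^ (n - 2)) := by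
    have := sub_nonneg.2 hq1
    positivity
  have hP : ((n - 1 : ℕ) : ℝ) * (q * (1 - q) ^ (n - 2)) ≤ n * q :=
    mul_le_mul (Nat.cast_le.2 (Nat.sub_le n 1))
      (mul_le_of_le_one_right hq0 (pow_le_one₀ (sub_nonneg.2 hq1) (by linarith))) (by positivity)
      (Nat.cast_nonneg n)
  nlinarith

lemma covariance_leafEvent_le (hq0 : 0 ≤ q) (hq1 : q ≤ 1) {v u : Fin n} (h : v ≠ u) :
    cov[(leafEvent v).indicator 1, (leafEvent u).indicator 1; gnp n q] ≤ q + n ^ 2 * q ^ 3 := by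
  rw [covariance_indicator_one (measurableSet_of_edges _) (measurableSet_of_edges _),
    gnp_real_leafEvent hq0 hq1, gnp_real_leafEvent hq0 hq1]
  set m : ℝ := ((n - 1 : ℕ) : ℝ)
  have hm : m ^ 2 * q ^ 2 ≤ n ^ 2 * q ^ 2 := by
    gcongr
    exact Nat.cast_le.2 (Nat.sub_le n 1)
  have hD : (1 - q) ^ (2 * n - 5) - (1 - q) ^ (2 * (n - 2)) ≤ q := by
    simpa using pow_sub_pow_le_one_sub (sub_nonneg.2 hq1) (by linarith) (by omega)
  have hD0 : 0 ≤ (1 - q) ^ (2 * n - 5) - (1 - q) ^ (2 * (n - 2)) :=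
    sub_nonneg.2 (pow_le_pow_of_le_one (sub_nonneg.2 hq1) (by linarith) (by omega))
  calc _ ≤ q + m ^ 2 * (q ^ 2 * (1 - q) ^ (2 * n - 5)) -
          m * (q * (1 - q) ^ (n - 2)) * (m * (q * (1 - q) ^ (n - 2))) :=
        sub_le_sub_right (gnp_real_leafEvent_inter_le hq0 hq1 h) _
    _ = q + m ^ 2 * q ^ 2 * ((1 - q) ^ (2 * n - 5) - (1 - q) ^ (2 * (n - 2))) := by ring
    _ ≤ q + n ^ 2 * q ^ 2 * q := by gcongr
    _ = q + n ^ 2 * q ^ 3 := by ring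

lemma variance_card_leaves_le (hq0 : 0 ≤ q) (hq1 : q ≤ 1) :
    Var[fun f => (#(leaves (graphOf f)) : ℝ); gnp n q] ≤ n * (2 * (n * q) + (n * q) ^ 3) := by
  simp_rw [card_leaves_graphOf]
  rw [variance_fun_sum fun _ => .of_discrete]
  have hrow : ∀ v : Fin n,
      ∑ u, cov[(leafEvent v).indicator 1, (leafEvent u).indicator 1; gnp n q] ≤
        2 * (n * q) + (n * q) ^ 3 := by
    intro v
    rw [← add_sum_erase _ _ (mem_univ v)]
    calc _ ≤ n * q + ∑ u ∈ univ.erase v, (q + n ^ 2 * q ^ 3) :=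
          add_le_add (covariance_leafEvent_self_le hq0 hq1 v)
            (sum_le_sum fun u hu => covariance_leafEvent_le hq0 hq1 (ne_of_mem_erase hu).symm)
      _ = n * q + (n - 1 : ℕ) * (q + n ^ 2 * q ^ 3) := by
          rw [sum_const, card_erase_of_mem (mem_univ v), card_univ, Fintype.card_fin, nsmul_eq_mul]
      _ ≤ n * q + n * (q + n ^ 2 * q ^ 3) := by
          gcongr
          exact Nat.sub_le n 1
      _ = 2 * (n * q) + (n * q) ^ 3 := by ring
  refine (sum_le_card_nsmul univ _ _ fun v _ => hrow v).trans_eq ?_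
  rw [card_univ, Fintype.card_fin, nsmul_eq_mul]

end SecondMoment

section Concentration

open ProbabilityTheory Real

lemma exp_neg_two_mul_le_one_sub {x : ℝ} (h0 : 0 ≤ x) (h : x ≤ 1 / 2) :
    exp (-2 * x) ≤ 1 - x := by
  have hpos : 0 < 1 - x := by linarith
  have hinv : (1 - x)⁻¹ ≤ 1 + 2 * x := by
    rw [inv_le_iff_one_le_mul₀ hpos]
    nlinarith
  calc exp (-2 * x) ≤ exp (log (1 - x)) := by
        gcongr
        linarith [one_sub_inv_le_log_of_pos hpos]
    _ = 1 - x := exp_log hpos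

lemma exp_neg_two_mul_le_one_sub_pow {x K : ℝ} {m : ℕ} (h0 : 0 ≤ x) (h : x ≤ 1 / 2)
    (hK : m * x ≤ K) : exp (-2 * K) ≤ (1 - x) ^ m :=
  calc exp (-2 * K) ≤ exp (-2 * x) ^ m := by
        rw [← exp_nat_mul]
        exact exp_le_exp.2 (by linarith)
    _ ≤ (1 - x) ^ m := by
        gcongr
        exact exp_neg_two_mul_le_one_sub h0 h

variable {ε K q : ℝ} {n : ℕ}

lemma le_integral_card_leaves (hn : 1 ≤ n) (hq0 : 0 ≤ q) (hq : q ≤ 1 / 2) (hnq : ε ≤ n * q)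
    (hnq' : n * q ≤ K) :
    ε * exp (-2 * K) * (n - 1) ≤ ∫ f, (#(leaves (graphOf f)) : ℝ) ∂gnp n q := by
  have hpow : exp (-2 * K) ≤ (1 - q) ^ (n - 2) := by
    refine exp_neg_two_mul_le_one_sub_pow hq0 hq (le_trans ?_ hnq')
    gcongr
    exact Nat.sub_le n 2
  have hn1 : (0 : ℝ) ≤ n - 1 := by
    rw [sub_nonneg]
    exact_mod_cast hn
  rw [integral_card_leaves hq0 (by linarith), Nat.cast_sub hn, Nat.cast_one]
  calc ε * exp (-2 * K) * (n - 1) ≤ (n * q) * (1 - q) ^ (n - 2) * (n - 1) := by gcongr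
    _ = n * ((n - 1) * (q * (1 - q) ^ (n - 2))) := by ring

lemma gnp_card_leaves_lt_le (hε : 0 < ε) (hn : 4 ≤ n) (hKn : 2 * K ≤ n) (hq : ε / n ≤ q)
    (hq' : q ≤ K / n) :
    gnp n q {f | (#(leaves (graphOf f)) : ℝ) < ε / 2 * exp (-2 * K) * n} ≤
      ENNReal.ofReal (16 * (2 * K + K ^ 3) / (ε * exp (-2 * K)) ^ 2 / n) := by
  have hn4 : (4 : ℝ) ≤ n := by exact_mod_cast hn
  have hnq : ε ≤ n * q := by rwa [div_le_iff₀' (by positivity)] at hq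
  have hnq' : n * q ≤ K := by rwa [le_div_iff₀' (by positivity)] at hq'
  have hq0 : 0 ≤ q := by nlinarith
  have hq2 : q ≤ 1 / 2 := by nlinarith
  set X := fun f : Sym2 (Fin n) → Bool => (#(leaves (graphOf f)) : ℝ)
  set c := ε * exp (-2 * K)
  have hc : 0 < c := by positivity
  have hgap : c * n / 4 ≤ (gnp n q)[X] - c / 2 * n := by
    nlinarith [le_integral_card_leaves (by omega) hq0 hq2 hnq hnq']
  have hvar : Var[X; gnp n q] ≤ n * (2 * K + K ^ 3) := by
    refine (variance_card_leaves_le hq0 (by linarith)).trans ?_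
    gcongr
  have hsub : {f | X f < ε / 2 * exp (-2 * K) * n} ⊆
      {f | (gnp n q)[X] - c / 2 * n ≤ |X f - (gnp n q)[X]|} := fun f hf => by
    simp only [Set.mem_ofPred_eq] at hf ⊢
    rw [abs_sub_comm]
    exact le_trans (by linarith) (le_abs_self _)
  refine (measure_mono hsub).trans <| (meas_ge_le_variance_div_sq .of_discrete
    ((by positivity : 0 < c * n / 4).trans_le hgap)).trans (ENNReal.ofReal_le_ofReal ?_)
  calc Var[X; gnp n q] / ((gnp n q)[X] - c / 2 * n) ^ 2
      ≤ n * (2 * K + K ^ 3) / (c * n / 4) ^ 2 := by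
        have hK : 0 ≤ K := by linarith
        gcongr
    _ = 16 * (2 * K + K ^ 3) / c ^ 2 / n := by
        field_simp
        ring

end Concentration

section Domination

variable {n : ℕ}

/-- Drop from `univ` every leaf whose neighbour is not a leaf, and the smaller leaf of every
isolated edge: what remains dominates, and at least half of the leaves were dropped. -/
lemma two_mul_domNumber_add_card_leaves_le (G : SimpleGraph (Fin n)) :
    2 * domNumber G + #(leaves G) ≤ 2 * n := by
  set L := leaves G
  have hnb : ∀ v ∈ L, ∃ w, G.neighborFinset v = {w} := fun v hv =>
    card_eq_one.1 ((G.card_neighborFinset_eq_degree v).trans (mem_filter.1 hv).2)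
  choose! nb hnb using hnb
  have hadj : ∀ v ∈ L, ∀ w, G.Adj v w ↔ w = nb v := fun v hv w => by
    rw [← G.mem_neighborFinset, hnb v hv, mem_singleton]
  have hne : ∀ v ∈ L, nb v ≠ v := fun v hv => ((hadj v hv _).2 rfl).ne.symm
  have hinv : ∀ v ∈ L, nb v ∈ L → nb (nb v) = v := fun v hv hnv =>
    ((hadj _ hnv v).1 ((hadj v hv _).2 rfl).symm).symm
  set L' := L.filter fun v => nb v ∉ L ∨ v < nb v
  have hdom : IsDominating G ↑(univ \ L') := by
    intro v
    by_cases hv : v ∈ L'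
    · obtain ⟨hvL, hv'⟩ := mem_filter.1 hv
      refine .inr ⟨nb v, ?_, ((hadj v hvL _).2 rfl).symm⟩
      simp only [coe_sdiff, coe_univ, Set.mem_sdiff, Set.mem_univ, mem_coe, true_and]
      intro hnv
      obtain ⟨hnvL, hnv'⟩ := mem_filter.1 hnv
      rw [hinv v hvL hnvL] at hnv'
      have := hv'.resolve_left (not_not.2 hnvL)
      have := hnv'.resolve_left (not_not.2 hvL)
      omega
    · exact .inl (by simpa using hv)
  have hmem : ∀ v ∈ L \ L', v ∈ L ∧ nb v ∈ L ∧ nb v < v := by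
    intro v hv
    obtain ⟨hvL, hvL'⟩ := mem_sdiff.1 hv
    have : ¬(nb v ∉ L ∨ v < nb v) := fun h => hvL' (mem_filter.2 ⟨hvL, h⟩)
    simp only [not_or, not_not, not_lt] at this
    exact ⟨hvL, this.1, lt_of_le_of_ne this.2 (hne v hvL)⟩
  have hcard : #(L \ L') ≤ #L' := by
    refine card_le_card_of_injOn nb (fun v hv => ?_) fun v₁ hv₁ v₂ hv₂ h => ?_
    · obtain ⟨hvL, hnvL, hlt⟩ := hmem v hv
      exact mem_filter.2 ⟨hnvL, .inr (by rwa [hinv v hvL hnvL])⟩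
    · obtain ⟨hv₁L, hnv₁L, -⟩ := hmem v₁ hv₁
      obtain ⟨hv₂L, hnv₂L, -⟩ := hmem v₂ hv₂
      rw [← hinv v₁ hv₁L hnv₁L, ← hinv v₂ hv₂L hnv₂L, h]
  have hsplit : #(L \ L') + #L' = #L := card_sdiff_add_card_eq_card (filter_subset _ L)
  have hD : domNumber G ≤ #(univ \ L') := Nat.sInf_le ⟨univ \ L', rfl, hdom⟩
  rw [card_univ_sdiff, Fintype.card_fin] at hD
  have : #L' ≤ n := (card_le_univ L').trans (Fintype.card_fin n).le
  omega

end Domination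

lemma tendsto_measure_of_tendsto_measure_compl {ι : Type*} {l : Filter ι} {Ω : ι → Type*}
    [∀ i, MeasurableSpace (Ω i)] {μ : ∀ i, Measure (Ω i)}
    [∀ i, IsProbabilityMeasure (μ i)] {S : ∀ i, Set (Ω i)} (hS : ∀ i, MeasurableSet (S i))
    (h : Tendsto (fun i => μ i (S i)ᶜ) l (nhds 0)) :
    Tendsto (fun i => μ i (S i)) l (nhds 1) := by
  have := ENNReal.Tendsto.sub tendsto_const_nhds h (.inl ENNReal.one_ne_top)
  simp_rw [← prob_compl_eq_one_sub (hS _).compl, compl_compl, tsub_zero] at this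
  exact this

theorem stmt_19_general (ε K : ℝ) (hε : 0 < ε)
    (p : ℕ → ℝ) (hp : ∀ n : ℕ, ε / n ≤ p n ∧ p n ≤ K / n) :
    Tendsto (fun n : ℕ => gnp n (p n)
        {f | ε / 2 * Real.exp (-2 * K) * n ≤
              ((Finset.univ.filter (fun v : Fin n =>
                (Finset.univ.filter (fun w : Fin n => (graphOf f).Adj v w)).card = 1)).card
                : ℝ)}) atTop (nhds 1) ∧
    Tendsto (fun n : ℕ => gnp n (p n)
        {f | (domNumber (graphOf f) : ℝ) ≤ (1 - ε / 4 * Real.exp (-2 * K)) * n})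
      atTop (nhds 1) := by
  set C : ℝ := 16 * (2 * K + K ^ 3) / (ε * Real.exp (-2 * K)) ^ 2
  have h_leaves : Tendsto (fun n => gnp n (p n)
      {f | ε / 2 * Real.exp (-2 * K) * n ≤ (#(leaves (graphOf f)) : ℝ)}) atTop (nhds 1) := by
    refine tendsto_measure_of_tendsto_measure_compl (fun _ => measurableSet_of_edges _) ?_
    have hC : Tendsto (fun n : ℕ => ENNReal.ofReal (C / n)) atTop (nhds 0) := by
      simpa using (ENNReal.tendsto_ofReal (tendsto_const_div_atTop_nhds_zero_nat C))
    refine tendsto_of_tendsto_of_tendsto_of_le_of_le' tendsto_const_nhds hC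
      (.of_forall fun _ => bot_le) ?_
    filter_upwards [eventually_ge_atTop 4, eventually_ge_atTop ⌈2 * K⌉₊] with n hn hKn
    simp only [Set.compl_ofPred, not_le]
    exact gnp_card_leaves_lt_le hε hn (Nat.ceil_le.1 hKn) (hp n).1 (hp n).2
  refine ⟨by simp only [card_filter_adj_eq_degree]; exact h_leaves, ?_⟩
  refine tendsto_of_tendsto_of_tendsto_of_le_of_le h_leaves tendsto_const_nhds
    (fun n => measure_mono fun f hf => ?_) fun _ => prob_le_one
  have := two_mul_domNumber_add_card_leaves_le (graphOf f)
  simp only [Set.mem_ofPred_eq] at hf ⊢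
  have : (2 * domNumber (graphOf f) + #(leaves (graphOf f)) : ℝ) ≤ 2 * n := by
    exact_mod_cast this
  linarith

/-- if `ε/n ≤ p ≤ K/n` with `0 < ε ≤ K`, then a.a.s. `G(n,p)` has at
least `(ε/2) e^{-2K} n` vertices of degree exactly `1`, and consequently a.a.s.
`D(G(n,p)) ≤ (1 - (ε/4) e^{-2K}) n`. -/
theorem stmt_19 (ε K : ℝ) (hε : 0 < ε) (hεK : ε ≤ K)
    (p : ℕ → ℝ) (hp : ∀ n : ℕ, ε / n ≤ p n ∧ p n ≤ K / n) :
    Tendsto (fun n : ℕ => gnp n (p n)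
        {f | ε / 2 * Real.exp (-2 * K) * n ≤
              ((Finset.univ.filter (fun v : Fin n =>
                (Finset.univ.filter (fun w : Fin n => (graphOf f).Adj v w)).card = 1)).card
                : ℝ)}) atTop (nhds 1) ∧
    Tendsto (fun n : ℕ => gnp n (p n)
        {f | (domNumber (graphOf f) : ℝ) ≤ (1 - ε / 4 * Real.exp (-2 * K)) * n})
      atTop (nhds 1) :=
  stmt_19_general ε K hε p hp
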